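/- Let p ≥ 1 and k ≥ 2, and set A_g = {x ∈ [0,1]^k : g(x₁,…,x_{k−1}) > g(x₂,…,x_k)} for measurable g : [0,1]^{k−1} → {0,…,p−1}. Let T : [0,1]^k → [0,1]^k be the cyclic coordinate shift T(x)_i = x_{i+1 mod k}. Then the number of indices j ∈ {0,…,k−1} such that x ∈ Tʲ(A_g) is at most k − 1 − ⌊(k−1)/p⌋ for almost every x ∈ [0,1]^k; equivalently, k·μ(A_gᶜ) ≥ 1 + ⌊(k−1)/p⌋. -/

import Mathlib

open MeasureTheory unitInterval ENNReal

open Finset in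
private lemma comb_lemma (k p : ℕ) (hk : 1 ≤ k) (hp : 1 ≤ p) (f : ℕ → Fin p)
    (hfk : f k = f 0) :
    k ≤ ((Finset.range k).filter (fun m => ¬ f (m+1) < f m)).card * p := by
  classical
  set F : ℕ → ℤ := fun m => ((f m : ℕ) : ℤ) with hF
  have htel : ∑ m ∈ Finset.range k, (F (m+1) - F m) = 0 := by
    rw [Finset.sum_range_sub]; simp [hF, hfk]
  have hbound : ∀ m ∈ Finset.range k,
      F (m+1) - F m ≤ (if ¬ f (m+1) < f m then ((p:ℤ) - 1) else -1) := by
    intro m _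
    have h1 : (f (m+1) : ℕ) < p := (f (m+1)).2
    have h2 : (f m : ℕ) < p := (f m).2
    by_cases h : f (m+1) < f m
    · have : (f (m+1) : ℕ) < (f m : ℕ) := h
      simp only [h, not_true_eq_false, if_false, hF]
      omega
    · have : ¬ (f (m+1) : ℕ) < (f m : ℕ) := fun hc => h hc
      simp only [h, not_false_eq_true, if_true, hF]
      omega
  have hsum := Finset.sum_le_sum hbound
  rw [htel, Finset.sum_ite, Finset.sum_const, Finset.sum_const] at hsum
  set a := ((Finset.range k).filter (fun m => ¬ f (m+1) < f m)).card with ha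
  set d := ((Finset.range k).filter (fun m => f (m+1) < f m)).card with hd
  simp only [not_not] at hsum
  have hda := Finset.card_filter_add_card_filter_not
      (s := Finset.range k) (p := fun m => ¬ f (m+1) < f m)
  simp only [not_not, Finset.card_range] at hda
  have hab : (0:ℤ) ≤ a * ((p:ℤ)-1) + d * (-1) := by
    simpa [nsmul_eq_mul] using hsum
  have hexp : (a:ℤ) * ((p:ℤ)-1) = a*p - a := by ring
  have : (k:ℤ) ≤ (a:ℤ) * p := by
    have hk' : (a:ℤ) + d = k := by exact_mod_cast hda
    linarith [hab, hexp]
  exact_mod_cast this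

/-- pointwise a.e. bound on the number of cyclic shifts landing in
`A_g`, and the equivalent measure bound `k·μ(A_gᶜ) ≥ 1 + ⌊(k-1)/p⌋`. -/
theorem stmt_13 (k p : ℕ) (hk : 2 ≤ k) (hp : 1 ≤ p)
    (g : (Fin (k - 1) → I) → Fin p) (hg : Measurable g)
    (A : Set (Fin k → I))
    (hA : A = {x : Fin k → I |
      g (fun i => x (Fin.castLE (by omega) i)) >
      g (fun i => x ⟨i.1 + 1, by omega⟩)})
    (T : (Fin k → I) → (Fin k → I)) (hT : T = fun x i => x ⟨(i.1 + 1) % k, Nat.mod_lt _ (by omega)⟩) :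
    (∀ᵐ x : Fin k → I,
        {j : ℕ | j < k ∧ x ∈ T^[j] '' A}.ncard ≤ k - 1 - (k - 1) / p) ∧
      (1 + (((k - 1) / p : ℕ) : ℝ≥0∞)) ≤ k * volume Aᶜ := by
  classical
  have hk0 : 0 < k := by omega
  -- iterate formula
  have hTit : ∀ (j : ℕ) (x : Fin k → I) (i : Fin k),
      (T^[j]) x i = x ⟨(i.1 + j) % k, Nat.mod_lt _ hk0⟩ := by
    intro j
    induction j with
    | zero =>
      intro x i
      simp only [Function.iterate_zero, id_eq]
      exact congrArg x (Fin.ext (Nat.mod_eq_of_lt i.2).symm)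
    | succ j ih =>
      intro x i
      rw [Function.iterate_succ_apply, ih (T x) i]
      simp only [hT]
      refine congrArg x (Fin.ext ?_)
      show ((i.1 + j) % k + 1) % k = (i.1 + (j+1)) % k
      rw [Nat.mod_add_mod, Nat.add_assoc]
  -- T^[k] is the identity
  have hTk : ∀ x : Fin k → I, T^[k] x = x := by
    intro x
    funext i
    rw [hTit]
    exact congrArg x (Fin.ext (by
      show (i.1 + k) % k = i.1
      rw [Nat.add_mod_right, Nat.mod_eq_of_lt i.2]))
  -- the window function
  set f : (Fin k → I) → ℕ → Fin p :=
    fun x m => g (fun i => x ⟨(i.1 + m) % k, Nat.mod_lt _ hk0⟩) with hf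
  -- periodicity
  have hper : ∀ (x : Fin k → I) (m : ℕ), f x (m + k) = f x m := by
    intro x m
    simp only [hf]
    congr 1
    funext i
    exact congrArg x (Fin.ext (by
      show (i.1 + (m + k)) % k = (i.1 + m) % k
      rw [← Nat.add_assoc, Nat.add_mod_right]))
  -- membership formula for iterates
  have hmem : ∀ (x : Fin k → I) (m : ℕ), (T^[m] x ∈ A ↔ f x (m+1) < f x m) := by
    intro x m
    rw [hA]
    simp only [Set.mem_setOf_eq, gt_iff_lt, hf]
    have h1 : (fun i : Fin (k-1) => (T^[m] x) (Fin.castLE (by omega) i))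
        = fun i : Fin (k-1) => x ⟨(i.1 + m) % k, Nat.mod_lt _ hk0⟩ := by
      funext i
      rw [hTit]
      rfl
    have h2 : (fun i : Fin (k-1) => (T^[m] x) ⟨i.1 + 1, by omega⟩)
        = fun i : Fin (k-1) => x ⟨(i.1 + (m+1)) % k, Nat.mod_lt _ hk0⟩ := by
      funext i
      rw [hTit]
      exact congrArg x (Fin.ext (by
        show (i.1 + 1 + m) % k = (i.1 + (m+1)) % k
        rw [Nat.add_assoc, Nat.add_comm 1 m]))
    rw [h1, h2]
  -- image sets are preimages
  have himg : ∀ (x : Fin k → I) (j : ℕ), j ≤ k → (x ∈ T^[j] '' A ↔ T^[k-j] x ∈ A) := by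
    intro x j hj
    constructor
    · rintro ⟨y, hy, rfl⟩
      rw [← Function.iterate_add_apply, Nat.sub_add_cancel hj, hTk]
      exact hy
    · intro h
      exact ⟨T^[k-j] x, h, by
        rw [← Function.iterate_add_apply, show j + (k - j) = k by omega, hTk]⟩
  -- key equivalence for j < k
  have hkey : ∀ (x : Fin k → I) (j : ℕ), j < k →
      (x ∈ T^[j] '' A ↔ f x ((k-j) % k + 1) < f x ((k-j) % k)) := by
    intro x j hj
    rw [himg x j (le_of_lt hj), hmem]
    by_cases h0 : j = 0
    · subst h0
      rw [Nat.sub_zero, Nat.mod_self]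
      constructor
      · intro h
        have e1 : f x (k + 1) = f x 1 := by
          rw [show k + 1 = 1 + k from Nat.add_comm _ _, hper]
        have e2 : f x k = f x 0 := by
          have := hper x 0; rwa [Nat.zero_add] at this
        rw [← e1, ← e2]; exact h
      · intro h
        have e1 : f x (k + 1) = f x 1 := by
          rw [show k + 1 = 1 + k from Nat.add_comm _ _, hper]
        have e2 : f x k = f x 0 := by
          have := hper x 0; rwa [Nat.zero_add] at this
        rw [e1, e2]; exact h
    · rw [Nat.mod_eq_of_lt (by omega)]
  -- inversion of the index map
  have hinv : ∀ j : ℕ, j < k → (k - (k - j) % k) % k = j := by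
    intro j hj
    by_cases h0 : j = 0
    · subst h0; rw [Nat.sub_zero, Nat.mod_self, Nat.sub_zero, Nat.mod_self]
    · rw [Nat.mod_eq_of_lt (show k - j < k by omega), show k - (k - j) = j by omega,
        Nat.mod_eq_of_lt hj]
  -- counting bijection: shifts landing in A ↔ descents
  have hcount : ∀ x : Fin k → I,
      ((Finset.range k).filter (fun j => x ∈ T^[j] '' A)).card
        = ((Finset.range k).filter (fun m => f x (m+1) < f x m)).card := by
    intro x
    refine Finset.card_bij' (fun j _ => (k - j) % k) (fun m _ => (k - m) % k) ?_ ?_ ?_ ?_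
    · intro j hj
      rw [Finset.mem_filter, Finset.mem_range] at hj ⊢
      exact ⟨Nat.mod_lt _ hk0, (hkey x j hj.1).1 hj.2⟩
    · intro m hm
      rw [Finset.mem_filter, Finset.mem_range] at hm ⊢
      refine ⟨Nat.mod_lt _ hk0, ?_⟩
      rw [hkey x _ (Nat.mod_lt _ hk0), hinv m hm.1]
      exact hm.2
    · intro j hj
      rw [Finset.mem_filter, Finset.mem_range] at hj
      exact hinv j hj.1
    · intro m hm
      rw [Finset.mem_filter, Finset.mem_range] at hm
      exact hinv m hm.1
  -- descent bound and ascent bound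
  set q := (k - 1) / p with hq
  have hbounds : ∀ x : Fin k → I,
      ((Finset.range k).filter (fun m => f x (m+1) < f x m)).card ≤ k - 1 - q ∧
      1 + q ≤ ((Finset.range k).filter (fun m => ¬ f x (m+1) < f x m)).card := by
    intro x
    have hfk : f x k = f x 0 := by
      have := hper x 0; rwa [Nat.zero_add] at this
    have hcomb := comb_lemma k p (by omega) hp (f x) hfk
    set a := ((Finset.range k).filter (fun m => ¬ f x (m+1) < f x m)).card with ha
    set d := ((Finset.range k).filter (fun m => f x (m+1) < f x m)).card with hd
    have hda := Finset.card_filter_add_card_filter_not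
        (s := Finset.range k) (p := fun m => ¬ f x (m+1) < f x m)
    simp only [not_not, Finset.card_range] at hda
    have hqa : q < a := by
      rw [hq, Nat.div_lt_iff_lt_mul (by omega)]
      omega
    constructor
    · omega
    · omega
  constructor
  · -- pointwise bound (holds everywhere)
    refine Filter.Eventually.of_forall (fun x => ?_)
    have hset : {j : ℕ | j < k ∧ x ∈ T^[j] '' A}
        = ↑((Finset.range k).filter (fun j => x ∈ T^[j] '' A)) := by
      ext j
      simp only [Set.mem_setOf_eq, Finset.coe_filter, Finset.mem_range]
    rw [hset, Set.ncard_coe_finset, hcount x]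
    exact (hbounds x).1
  · -- measure bound
    -- measurability of A
    have hAmeas : MeasurableSet A := by
      rw [hA]
      have hg1 : Measurable (fun x : Fin k → I =>
          g (fun i => x (Fin.castLE (by omega : k - 1 ≤ k) i))) :=
        hg.comp (measurable_pi_lambda _ (fun i => measurable_pi_apply _))
      have hg2 : Measurable (fun x : Fin k → I =>
          g (fun i : Fin (k-1) => x ⟨i.1 + 1, by omega⟩)) :=
        hg.comp (measurable_pi_lambda _ (fun i => measurable_pi_apply _))
      have hrw : {x : Fin k → I |
            g (fun i => x (Fin.castLE (by omega) i)) >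
            g (fun i => x ⟨i.1 + 1, by omega⟩)}
          = ⋃ a : Fin p,
              ((fun x : Fin k → I => g (fun i => x (Fin.castLE (by omega : k - 1 ≤ k) i))) ⁻¹' {a})
              ∩ ((fun x : Fin k → I => g (fun i : Fin (k-1) => x ⟨i.1 + 1, by omega⟩)) ⁻¹' {b | b < a}) := by
        ext x
        simp only [Set.mem_setOf_eq, Set.mem_iUnion, Set.mem_inter_iff, Set.mem_preimage,
          Set.mem_singleton_iff, gt_iff_lt]
        constructor
        · intro h; exact ⟨_, rfl, h⟩
        · rintro ⟨a, rfl, h⟩; exact h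
      rw [hrw]
      exact MeasurableSet.iUnion fun a =>
        (hg1 (measurableSet_singleton a)).inter (hg2 ((Set.to_countable _).measurableSet))
    -- T is measure preserving
    have hmp : MeasurePreserving T (volume : Measure (Fin k → I)) volume := by
      let ee : Fin k ≃ Fin k :=
        { toFun := fun i => ⟨(i.1 + 1) % k, Nat.mod_lt _ hk0⟩
          invFun := fun i => ⟨(i.1 + (k-1)) % k, Nat.mod_lt _ hk0⟩
          left_inv := fun i => Fin.ext (by
            show ((i.1+1) % k + (k-1)) % k = i.1
            rw [Nat.mod_add_mod, show i.1+1+(k-1) = i.1+k by omega, Nat.add_mod_right,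
              Nat.mod_eq_of_lt i.2])
          right_inv := fun i => Fin.ext (by
            show ((i.1+(k-1)) % k + 1) % k = i.1
            rw [Nat.mod_add_mod, show i.1+(k-1)+1 = i.1+k by omega, Nat.add_mod_right,
              Nat.mod_eq_of_lt i.2]) }
      have hTe : T = ⇑(MeasurableEquiv.piCongrLeft (fun _ : Fin k => ↥I) ee.symm) := by
        funext x i
        rw [MeasurableEquiv.coe_piCongrLeft]
        have h := Equiv.piCongrLeft_apply_apply (P := fun _ : Fin k => ↥I)
          (e := ee.symm) x (ee i)
        rw [Equiv.symm_apply_apply] at h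
        rw [hT]
        exact h.symm
      rw [hTe]
      exact volume_measurePreserving_piCongrLeft (fun _ : Fin k => ↥I) ee.symm
    have heeit : ∀ m : ℕ, MeasurePreserving (T^[m]) (volume : Measure (Fin k → I)) volume :=
      fun m => hmp.iterate m
    have hSpre : ∀ j : ℕ, j ≤ k → T^[j] '' A = T^[k-j] ⁻¹' A := by
      intro j hj
      ext x
      exact himg x j hj
    have hSmeas : ∀ j : ℕ, j < k → MeasurableSet ((T^[j] '' A)ᶜ) := by
      intro j hj
      rw [hSpre j hj.le]
      exact ((heeit (k-j)).measurable hAmeas).compl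
    have hμS : ∀ j : ℕ, j < k → volume ((T^[j] '' A)ᶜ) = volume Aᶜ := by
      intro j hj
      rw [hSpre j hj.le, ← Set.preimage_compl]
      exact (heeit (k-j)).measure_preimage hAmeas.compl.nullMeasurableSet
    have key : ((1 + q : ℕ) : ℝ≥0∞) ≤ k * volume Aᶜ := by
      calc ((1 + q : ℕ) : ℝ≥0∞)
          = ((1 + q : ℕ) : ℝ≥0∞) * volume (Set.univ : Set (Fin k → I)) := by
            rw [measure_univ, mul_one]
        _ = ∫⁻ _x : Fin k → I, ((1 + q : ℕ) : ℝ≥0∞) ∂volume := (lintegral_const _).symm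
        _ ≤ ∫⁻ x : Fin k → I,
              ∑ j ∈ Finset.range k, ((T^[j] '' A)ᶜ).indicator (fun _ => (1:ℝ≥0∞)) x ∂volume := by
            refine lintegral_mono (fun x => ?_)
            have hsum : ∑ j ∈ Finset.range k, ((T^[j] '' A)ᶜ).indicator (fun _ => (1:ℝ≥0∞)) x
                = (((Finset.range k).filter (fun j => ¬ x ∈ T^[j] '' A)).card : ℝ≥0∞) := by
              rw [← Finset.sum_boole]
              refine Finset.sum_congr rfl (fun j _ => ?_)
              by_cases h : x ∈ T^[j] '' A
              · simp [Set.indicator_apply, h]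
              · simp [Set.indicator_apply, h]
            rw [hsum]
            have hcard : 1 + q ≤ ((Finset.range k).filter (fun j => ¬ x ∈ T^[j] '' A)).card := by
              have h1 := hcount x
              have h2 := (hbounds x).2
              have e1 := Finset.card_filter_add_card_filter_not
                (s := Finset.range k) (p := fun j => x ∈ T^[j] '' A)
              have e2 := Finset.card_filter_add_card_filter_not
                (s := Finset.range k) (p := fun m => f x (m+1) < f x m)
              simp only [Finset.card_range] at e1 e2
              omega
            exact Nat.cast_le.mpr hcard
        _ = ∑ j ∈ Finset.range k,
              ∫⁻ x : Fin k → I, ((T^[j] '' A)ᶜ).indicator (fun _ => (1:ℝ≥0∞)) x ∂volume := by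
            refine lintegral_finset_sum _ (fun j hj => ?_)
            exact measurable_const.indicator (hSmeas j (Finset.mem_range.mp hj))
        _ = ∑ j ∈ Finset.range k, volume ((T^[j] '' A)ᶜ) := by
            refine Finset.sum_congr rfl (fun j hj => ?_)
            exact lintegral_indicator_one (hSmeas j (Finset.mem_range.mp hj))
        _ = ∑ _j ∈ Finset.range k, volume Aᶜ := by
            refine Finset.sum_congr rfl (fun j hj => hμS j (Finset.mem_range.mp hj))
        _ = k * volume Aᶜ := by
            rw [Finset.sum_const, Finset.card_range, nsmul_eq_mul]
    calc (1 + ((q : ℕ) : ℝ≥0∞)) = ((1 + q : ℕ) : ℝ≥0∞) := by push_cast; ring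
      _ ≤ k * volume Aᶜ := key
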